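/- arXiv:2501.00770 — 2 statements merged into one kernel-verified Lean document; each statement's English description precedes it below -/
import Mathlib

section
/- Let G be a finite group and S a finite semigroup. For the projection homomorphism π from the wreath product G ≀ S onto S, if x and y are regular elements of G ≀ S with π(x) = π(y), then x and y are L-equivalent in G ≀ S. -/
/-!
Since `G` is a group, the coordinate function of a left factor can correct any coordinate
function of the right one: `(f, u) * (g, s)` has coordinates `a ↦ f a * g (a * u)`, and
`f a := h a * (g (a * u))⁻¹` makes this an arbitrary `h`. Hence `x` lies in `(G ≀ S)¹ y` as
soon as `x.2` lies in `S y.2`, and for a regular `y = y z y` we have `y.2 = (y.2 * z.2) * y.2`.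
-/

/-- The wreath product `G ≀ S`: underlying set `G^(S¹) × S`. -/
def Wr (G S : Type*) := (WithOne S → G) × S

instance {G S : Type*} [Semigroup G] [Semigroup S] : Semigroup (Wr G S) where
  mul p q := (fun x => p.1 x * q.1 (x * (p.2 : WithOne S)), p.2 * q.2)
  mul_assoc p q r := by
    refine Prod.ext ?_ (mul_assoc _ _ _)
    funext x
    show (p.1 x * q.1 (x * (p.2 : WithOne S))) *
        r.1 (x * ((p.2 * q.2 : S) : WithOne S)) =
      p.1 x * (q.1 (x * (p.2 : WithOne S)) *
        r.1 ((x * (p.2 : WithOne S)) * (q.2 : WithOne S)))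
    rw [WithOne.coe_mul, ← mul_assoc, mul_assoc (p.1 x)]

/-- `x` lies in `T¹y` : `x = y` or `x = t * y` for some `t`. -/
def lLe {T : Type*} [Mul T] (x y : T) : Prop := x = y ∨ ∃ t, x = t * y

/-- Green's `L`-equivalence: `T¹x = T¹y`. -/
def LEquiv {T : Type*} [Mul T] (x y : T) : Prop := lLe x y ∧ lLe y x

/-- `x` is a regular element: `x = x * y * x` for some `y`. -/
def IsRegularElem {T : Type*} [Mul T] (x : T) : Prop := ∃ y, x = x * y * x

namespace Wr

variable {G S : Type*}

theorem lLe_of_mul_snd_eq [Group G] [Semigroup S] {x y : Wr G S} (u : S)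
    (hu : u * y.2 = x.2) : lLe x y := by
  refine Or.inr ⟨(fun a => x.1 a * (y.1 (a * (u : WithOne S)))⁻¹, u), Prod.ext ?_ hu.symm⟩
  funext a
  exact (inv_mul_cancel_right (x.1 a) (y.1 (a * (u : WithOne S)))).symm

theorem exists_mul_snd_eq_of_isRegularElem [Semigroup G] [Semigroup S] {y : Wr G S}
    (hy : IsRegularElem y) : ∃ u : S, u * y.2 = y.2 := by
  obtain ⟨z, hz⟩ := hy
  exact ⟨y.2 * z.2, (congrArg Prod.snd hz).symm⟩

theorem lLe_of_snd_eq [Group G] [Semigroup S] {x y : Wr G S} (hy : IsRegularElem y)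
    (h : x.2 = y.2) : lLe x y := by
  obtain ⟨u, hu⟩ := exists_mul_snd_eq_of_isRegularElem hy
  exact lLe_of_mul_snd_eq u (hu.trans h.symm)

end Wr

theorem wreath_projection_Lprime_general
    {G S : Type*} [Group G] [Semigroup S]
    (x y : Wr G S) (hx : IsRegularElem x) (hy : IsRegularElem y)
    (h : x.2 = y.2) : LEquiv x y :=
  ⟨Wr.lLe_of_snd_eq hy h, Wr.lLe_of_snd_eq hx h.symm⟩

/-- Let `G` be a finite group and `S` a finite semigroup.  If `x, y` are
regular elements of the wreath product `G ≀ S` with the same projection to `S`,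
then `x` and `y` are `L`-equivalent in `G ≀ S`; i.e., the projection
`G ≀ S → S` is an `L′` morphism. -/
theorem wreath_projection_Lprime
    {G S : Type*} [Group G] [Fintype G] [Semigroup S] [Fintype S]
    (x y : Wr G S) (hx : IsRegularElem x) (hy : IsRegularElem y)
    (h : x.2 = y.2) : LEquiv x y :=
  wreath_projection_Lprime_general x y hx hy h
end

section
/- Let S be a finite semigroup generated by a finite set X. Identifying two nonempty words over X if they multiply to the same element of S and their paths from the root in the right Cayley graph traverse the same set of transition edges defines a congruence on the free semigroup X⁺. -/
section KR

variable {X S : Type*} [Semigroup S]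

/-- The product in `S^I = S¹` of a word over the generating set `X`
(the vertex of the right Cayley graph reached from the root `I`). -/
def wordProd (σ : X → S) (w : List X) : WithOne S :=
  (w.map fun a => (σ a : WithOne S)).prod

/-- `x ≤_R y` in the monoid `S¹`: `x ∈ y S¹`. -/
def rLe (x y : WithOne S) : Prop := ∃ t : WithOne S, x = y * t

/-- Strict `R`-order in `S¹`. -/
def rLt (x y : WithOne S) : Prop := rLe x y ∧ ¬ rLe y x

/-- The set of transition edges traversed by the path reading the word `w`
from the vertex `s` in the right Cayley graph of `(S, X)`: an edge
`(p, a) : p → p·σ(a)` is a transition edge when `p·σ(a) <_R p`. -/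
def transEdges (σ : X → S) : WithOne S → List X → Set (WithOne S × X)
  | _, [] => ∅
  | s, a :: w =>
      {p | p = (s, a) ∧ rLt (s * (σ a : WithOne S)) s} ∪
        transEdges σ (s * (σ a : WithOne S)) w

/-- The Karnofsky–Rhodes relation: two words are identified iff they multiply
to the same element of `S` and their paths from the root traverse the same set
of transition edges. -/
def krRel (σ : X → S) (u v : List X) : Prop :=
  wordProd σ u = wordProd σ v ∧ transEdges σ 1 u = transEdges σ 1 v

end KR

/-!
The product component is a monoid morphism, so only the edge sets need care. Reading `u ++ v`
from a vertex `s` traverses the edges of `u` from `s`, then those of `v` from `s·[u]`. Reading a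
word from `t·s` instead of `s` moves each edge `(p, a)` of the path to `(t·p, a)`; an edge that
is a transition edge after the move already was one before, since `t·p·a ≤_R t·p` and
`p ≤_R p·a` would give `t·p ≤_R t·p·a`. Hence the transition edges of `w ++ u` read from the
root are determined by those of `w`, the product `[w]` and the transition edges of `u`, and
those of `u ++ w` by those of `u`, the product `[u]` and `w`.
-/

section KRLemmas

variable {X S : Type*} [Semigroup S]

lemma wordProd_cons (σ : X → S) (a : X) (u : List X) :
    wordProd σ (a :: u) = (σ a : WithOne S) * wordProd σ u := by
  simp [wordProd]

lemma wordProd_append (σ : X → S) (u v : List X) :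
    wordProd σ (u ++ v) = wordProd σ u * wordProd σ v := by
  simp [wordProd]

lemma rLt_of_rLt_mul_left {s x : WithOne S} (t : WithOne S) (h : rLt (t * s * x) (t * s)) :
    rLt (s * x) s := by
  refine ⟨⟨x, rfl⟩, fun ⟨r, hr⟩ => h.2 ⟨r, ?_⟩⟩
  rw [mul_assoc, mul_assoc, ← mul_assoc s x r, ← hr]

lemma transEdges_cons (σ : X → S) (s : WithOne S) (a : X) (u : List X) :
    transEdges σ s (a :: u) =
      {p | p = (s, a) ∧ rLt (s * (σ a : WithOne S)) s} ∪ transEdges σ (s * σ a) u :=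
  rfl

lemma transEdges_append (σ : X → S) (u v : List X) (s : WithOne S) :
    transEdges σ s (u ++ v) = transEdges σ s u ∪ transEdges σ (s * wordProd σ u) v := by
  induction u generalizing s with
  | nil => simp [transEdges, wordProd]
  | cons a w ih =>
    rw [List.cons_append, transEdges_cons, transEdges_cons, ih, wordProd_cons, ← mul_assoc,
      Set.union_assoc]

lemma transEdges_mul_left (σ : X → S) (u : List X) (t s : WithOne S) :
    transEdges σ (t * s) u =
      (fun q : WithOne S × X => (t * q.1, q.2)) ''
        {q ∈ transEdges σ s u | rLt (t * q.1 * (σ q.2 : WithOne S)) (t * q.1)} := by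
  induction u generalizing s with
  | nil => simp [transEdges]
  | cons a w ih =>
    rw [transEdges_cons, transEdges_cons, mul_assoc, ih]
    ext q
    simp only [Set.mem_union, Set.mem_ofPred_eq, Set.mem_image, ← mul_assoc]
    constructor
    · rintro (⟨rfl, hlt⟩ | ⟨p, ⟨hp, hlt⟩, rfl⟩)
      · exact ⟨(s, a), ⟨Or.inl ⟨rfl, rLt_of_rLt_mul_left t hlt⟩, hlt⟩, rfl⟩
      · exact ⟨p, ⟨Or.inr hp, hlt⟩, rfl⟩
    · rintro ⟨p, ⟨⟨rfl, _⟩ | hp, hlt⟩, rfl⟩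
      · exact Or.inl ⟨rfl, hlt⟩
      · exact Or.inr ⟨p, ⟨hp, hlt⟩, rfl⟩

lemma krRel_equivalence (σ : X → S) : Equivalence (krRel σ) :=
  ⟨fun _ => ⟨rfl, rfl⟩, fun h => ⟨h.1.symm, h.2.symm⟩,
    fun h h' => ⟨h.1.trans h'.1, h.2.trans h'.2⟩⟩

lemma krRel.append_left {σ : X → S} {u v : List X} (h : krRel σ u v) (w : List X) :
    krRel σ (w ++ u) (w ++ v) := by
  refine ⟨by rw [wordProd_append, wordProd_append, h.1], ?_⟩
  rw [transEdges_append, transEdges_append, one_mul, ← mul_one (wordProd σ w),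
    transEdges_mul_left, transEdges_mul_left, h.2]

lemma krRel.append_right {σ : X → S} {u v : List X} (h : krRel σ u v) (w : List X) :
    krRel σ (u ++ w) (v ++ w) := by
  refine ⟨by rw [wordProd_append, wordProd_append, h.1], ?_⟩
  rw [transEdges_append, transEdges_append, h.1, h.2]

end KRLemmas

theorem karnofsky_rhodes_congruence_general
    {X S : Type*} [Semigroup S] (σ : X → S) :
    Equivalence (fun u v : {w : List X // w ≠ []} => krRel σ u.1 v.1) ∧
    (∀ u v w : List X, u ≠ [] → v ≠ [] → w ≠ [] → krRel σ u v →
      krRel σ (w ++ u) (w ++ v) ∧ krRel σ (u ++ w) (v ++ w)) :=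
  ⟨(krRel_equivalence σ).comap Subtype.val,
    fun _ _ w _ _ _ h => ⟨h.append_left w, h.append_right w⟩⟩

/-- For a finite semigroup `S` generated by `X` (via `σ : X → S`), the
Karnofsky–Rhodes relation is a congruence on the free semigroup `X⁺`: it is an
equivalence relation on nonempty words, compatible with concatenation on both
sides. -/
theorem karnofsky_rhodes_congruence
    {X S : Type*} [Semigroup S] [Fintype S] (σ : X → S)
    (hgen : ∀ s : S, ∃ w : List X, w ≠ [] ∧ wordProd σ w = (s : WithOne S)) :
    Equivalence (fun u v : {w : List X // w ≠ []} => krRel σ u.1 v.1) ∧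
    (∀ u v w : List X, u ≠ [] → v ≠ [] → w ≠ [] → krRel σ u v →
      krRel σ (w ++ u) (w ++ v) ∧ krRel σ (u ++ w) (v ++ w)) :=
  karnofsky_rhodes_congruence_general σ
end
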